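/- In the setting of the coupled monitor age processes m^u and m^v (maximum-age-first versus an arbitrary rank sequence, with common initial sorted age vector, common action types, and common positive durations), for every horizon T > 0 the time-averaged network age under maximum-age-first is no larger: (1/T) ∫₀^T (1/n) ∑_{i} m^u_i(t) dt ≤ (1/T) ∫₀^T (1/n) ∑_{i} m^v_i(t) dt. -/

import Mathlib

/-- The two kinds of actions the gateway can take: poll a sensor, or send to the monitor. -/
inductive GWAction
  | poll : GWAction
  | send : GWAction
deriving DecidableEq

/-- The poll update of an ordered age vector `v` with rank `j` and duration `z`. -/
def pollUpdate {n : ℕ} (v : Fin n → ℝ) (j : Fin n) (z : ℝ) : Fin n → ℝ := fun i =>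
  if h : (i : ℕ) + 1 < n then
    (if (i : ℕ) < (j : ℕ) then v i + z else v ⟨(i : ℕ) + 1, h⟩ + z)
  else z

/-- The gateway age trajectory: starting from `v₀`, at step `k ≥ 1` apply the poll
update with rank `j k` and duration `z k` if `c k = poll`, and the send update
(all ages increase by `z k`) if `c k = send`. -/
def traj {n : ℕ} (v₀ : Fin n → ℝ) (c : ℕ → GWAction) (z : ℕ → ℝ) (j : ℕ → Fin n) :
    ℕ → Fin n → ℝ
  | 0 => v₀
  | k + 1 =>
    match c (k + 1) with
    | GWAction.poll => pollUpdate (traj v₀ c z j k) (j (k + 1)) (z (k + 1))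
    | GWAction.send => fun i => traj v₀ c z j k i + z (k + 1)

/-- `complTime z k = z 1 + ⋯ + z k` is the completion time of the `k`-th transmission
(`complTime z 0 = 0`). -/
def complTime (z : ℕ → ℝ) (k : ℕ) : ℝ := ∑ l ∈ Finset.range k, z (l + 1)

/-- The index of the last send action whose transmission has completed by time `t`
(`0` if no send has completed by time `t`). -/
noncomputable def lastSendIdx (c : ℕ → GWAction) (z : ℕ → ℝ) (t : ℝ) : ℕ :=
  sSup {K : ℕ | 1 ≤ K ∧ c K = GWAction.send ∧ complTime z K ≤ t}

/-- The age of sensor `i` at the monitor at time `t`: the gateway age of sensor `i` at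
the last completed send, plus the time elapsed since that completion (before the first
completed send this is `v₀ i + t`, since `traj … 0 = v₀` and `complTime z 0 = 0`). -/
noncomputable def monitorAge {n : ℕ} (v₀ : Fin n → ℝ) (c : ℕ → GWAction) (z : ℕ → ℝ)
    (j : ℕ → Fin n) (t : ℝ) (i : Fin n) : ℝ :=
  traj v₀ c z j (lastSendIdx c z t) i + (t - complTime z (lastSendIdx c z t))

namespace MafAux

def botSum {n : ℕ} (w : Fin n → ℝ) (m : ℕ) : ℝ :=
  ∑ l ∈ Finset.range m, (if h : n - 1 - l < n then w ⟨n - 1 - l, h⟩ else 0)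

lemma botSum_le_sum {n : ℕ} {w : Fin n → ℝ} (hw : Antitone w) :
    ∀ (m : ℕ) (s : Finset (Fin n)), s.card = m → botSum w m ≤ ∑ i ∈ s, w i := by
  intro m
  induction m with
  | zero =>
    intro s hs
    have : s = ∅ := Finset.card_eq_zero.mp hs
    simp [this, botSum]
  | succ m ih =>
    intro s hs
    have hne : s.Nonempty := Finset.card_pos.mp (by omega)
    set i0 := s.min' hne with hi0
    have hi0s : i0 ∈ s := s.min'_mem hne
    have herase : (s.erase i0).card = m := by
      rw [Finset.card_erase_of_mem hi0s, hs]; rfl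
    have hsub : s.erase i0 ⊆ Finset.Ioi i0 := by
      intro x hx
      rcases Finset.mem_erase.mp hx with ⟨hxne, hxs⟩
      exact Finset.mem_Ioi.mpr (lt_of_le_of_ne (s.min'_le x hxs) (Ne.symm hxne))
    have hcard : m ≤ n - 1 - (i0 : ℕ) := by
      have := Finset.card_le_card hsub
      rwa [herase, Fin.card_Ioi] at this
    have hi0n : (i0 : ℕ) < n := i0.2
    have hidx : n - 1 - m < n := by omega
    have hle : (i0 : ℕ) ≤ n - 1 - m := by omega
    have hval : w ⟨n - 1 - m, hidx⟩ ≤ w i0 := hw (by exact hle)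
    have hstep : botSum w (m + 1) = botSum w m + w ⟨n - 1 - m, hidx⟩ := by
      rw [botSum, Finset.sum_range_succ, dif_pos hidx]; rfl
    have hsum : ∑ i ∈ s, w i = w i0 + ∑ i ∈ s.erase i0, w i :=
      (Finset.add_sum_erase s w hi0s).symm
    rw [hstep, hsum]
    have := ih (s.erase i0) herase
    linarith

lemma botSum_send {n : ℕ} (hn : 1 ≤ n) (w : Fin n → ℝ) (zz : ℝ) (m : ℕ) :
    botSum (fun i => w i + zz) m = botSum w m + m * zz := by
  unfold botSum
  have h : ∀ l ∈ Finset.range m,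
      (if h : n - 1 - l < n then (fun i => w i + zz) ⟨n - 1 - l, h⟩ else 0)
      = (if h : n - 1 - l < n then w ⟨n - 1 - l, h⟩ else 0) + zz := by
    intro l _
    have hl : n - 1 - l < n := by omega
    rw [dif_pos hl, dif_pos hl]
  rw [Finset.sum_congr rfl h, Finset.sum_add_distrib, Finset.sum_const, Finset.card_range,
    nsmul_eq_mul]

lemma botSum_poll {n : ℕ} (hn : 1 ≤ n) (w : Fin n → ℝ) (zz : ℝ) {m : ℕ} (hm : m < n) :
    botSum (pollUpdate w ⟨0, hn⟩ zz) (m + 1) = (m + 1) * zz + botSum w m := by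
  unfold botSum
  rw [Finset.sum_range_succ']
  have h0 : (if h : n - 1 - 0 < n then pollUpdate w ⟨0, hn⟩ zz ⟨n - 1 - 0, h⟩ else 0) = zz := by
    have h : n - 1 - 0 < n := by omega
    rw [dif_pos h]
    unfold pollUpdate
    have hne : ¬ (((⟨n - 1 - 0, h⟩ : Fin n) : ℕ) + 1 < n) := by simp; omega
    rw [dif_neg hne]
  rw [h0]
  have hterm : ∀ l ∈ Finset.range m,
      (if h : n - 1 - (l + 1) < n then pollUpdate w ⟨0, hn⟩ zz ⟨n - 1 - (l + 1), h⟩ else 0)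
      = (if h : n - 1 - l < n then w ⟨n - 1 - l, h⟩ else 0) + zz := by
    intro l hl
    have hlm : l < m := Finset.mem_range.mp hl
    have h1 : n - 1 - (l + 1) < n := by omega
    have h2 : n - 1 - l < n := by omega
    rw [dif_pos h1, dif_pos h2]
    unfold pollUpdate
    have h3 : ((⟨n - 1 - (l + 1), h1⟩ : Fin n) : ℕ) + 1 < n := by simp; omega
    rw [dif_pos h3]
    have h4 : ¬ (((⟨n - 1 - (l + 1), h1⟩ : Fin n) : ℕ) < ((⟨0, hn⟩ : Fin n) : ℕ)) := by simp
    rw [if_neg h4]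
    have h5 : (⟨((⟨n - 1 - (l + 1), h1⟩ : Fin n) : ℕ) + 1, h3⟩ : Fin n) = ⟨n - 1 - l, h2⟩ := by
      apply Fin.ext; simp; omega
    rw [h5]
  rw [Finset.sum_congr rfl hterm, Finset.sum_add_distrib, Finset.sum_const,
    Finset.card_range, nsmul_eq_mul]
  push_cast
  ring

lemma sum_pollUpdate {n : ℕ} (w : Fin n → ℝ) (j : Fin n) (zz : ℝ) (s : Finset (Fin n)) :
    ∃ t : Finset (Fin n), s.card - 1 ≤ t.card ∧
      (s.card : ℝ) * zz + ∑ i ∈ t, w i ≤ ∑ i ∈ s, pollUpdate w j zz i := by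
  classical
  have hn0 : 0 < n ∨ s = ∅ := by
    rcases Nat.eq_zero_or_pos n with h | h
    · right; exact Finset.eq_empty_of_forall_notMem (fun x _ => absurd x.2 (by omega))
    · left; exact h
  rcases hn0 with hn | rfl
  swap
  · exact ⟨∅, by simp, by simp⟩
  set g : Fin n → Fin n := fun i =>
    if (i : ℕ) < (j : ℕ) then i else ⟨min ((i : ℕ) + 1) (n - 1), by omega⟩ with hg
  set s₁ := s.filter (fun i : Fin n => (i : ℕ) + 1 < n) with hs₁
  have hval : ∀ i ∈ s, pollUpdate w j zz i
      = zz + (if (i : ℕ) + 1 < n then w (g i) else 0) := by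
    intro i _
    unfold pollUpdate
    by_cases h : (i : ℕ) + 1 < n
    · rw [dif_pos h, if_pos h]
      by_cases h2 : (i : ℕ) < (j : ℕ)
      · have hgi : g i = i := by simp only [hg]; rw [if_pos h2]
        rw [if_pos h2, hgi]; ring
      · have hgi : g i = ⟨(i : ℕ) + 1, h⟩ := by
          simp only [hg]; rw [if_neg h2]; apply Fin.ext; simp; omega
        rw [if_neg h2, hgi]; ring
    · rw [dif_neg h, if_neg h]; ring
  have hsum : ∑ i ∈ s, pollUpdate w j zz i
      = (s.card : ℝ) * zz + ∑ i ∈ s₁, w (g i) := by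
    rw [Finset.sum_congr rfl hval, Finset.sum_add_distrib, Finset.sum_const,
      nsmul_eq_mul, hs₁, Finset.sum_filter]
  have hinj : Set.InjOn g s₁ := by
    intro a ha b hb hab
    have ha' : (a : ℕ) + 1 < n := by
      have := Finset.mem_coe.mp ha; rw [hs₁] at this; exact (Finset.mem_filter.mp this).2
    have hb' : (b : ℕ) + 1 < n := by
      have := Finset.mem_coe.mp hb; rw [hs₁] at this; exact (Finset.mem_filter.mp this).2
    have hga : (g a : ℕ) = if (a : ℕ) < (j : ℕ) then (a : ℕ) else (a : ℕ) + 1 := by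
      simp only [hg]; by_cases h : (a : ℕ) < (j : ℕ) <;> simp [h] <;> omega
    have hgb : (g b : ℕ) = if (b : ℕ) < (j : ℕ) then (b : ℕ) else (b : ℕ) + 1 := by
      simp only [hg]; by_cases h : (b : ℕ) < (j : ℕ) <;> simp [h] <;> omega
    have h := congrArg (fun x : Fin n => (x : ℕ)) hab
    simp only [hga, hgb] at h
    apply Fin.ext
    by_cases h1 : (a : ℕ) < (j : ℕ) <;> by_cases h2 : (b : ℕ) < (j : ℕ) <;>
      simp [h1, h2] at h <;> omega
  have hcard : s.card - 1 ≤ (s₁.image g).card := by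
    rw [Finset.card_image_of_injOn hinj]
    have hsub : s.filter (fun i : Fin n => ¬ ((i : ℕ) + 1 < n))
        ⊆ {(⟨n - 1, by omega⟩ : Fin n)} := by
      intro x hx
      rcases Finset.mem_filter.mp hx with ⟨_, hx2⟩
      have hxv : (x : ℕ) = n - 1 := by have := x.2; omega
      simp [Finset.mem_singleton, Fin.ext_iff, hxv]
    have h2 := Finset.card_le_card hsub
    rw [Finset.card_singleton] at h2
    have h3 := Finset.card_filter_add_card_filter_not
      (s := s) (p := fun i : Fin n => (i : ℕ) + 1 < n)
    rw [hs₁]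
    omega
  refine ⟨s₁.image g, hcard, ?_⟩
  rw [hsum, Finset.sum_image (fun a ha b hb => hinj ha hb)]

lemma traj_nonneg {n : ℕ} (v₀ : Fin n → ℝ) (c : ℕ → GWAction) (z : ℕ → ℝ) (j : ℕ → Fin n)
    (h0 : ∀ i, 0 ≤ v₀ i) (hz : ∀ k, 1 ≤ k → 0 < z k) :
    ∀ k i, 0 ≤ traj v₀ c z j k i := by
  intro k
  induction k with
  | zero => exact h0
  | succ k ih =>
    intro i
    have hzk : (0:ℝ) ≤ z (k + 1) := (hz (k + 1) (by omega)).le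
    show 0 ≤ traj v₀ c z j (k + 1) i
    unfold traj
    cases c (k + 1) with
    | poll =>
      simp only []
      unfold pollUpdate
      by_cases h : (i : ℕ) + 1 < n
      · rw [dif_pos h]
        by_cases h2 : (i : ℕ) < (j (k + 1) : ℕ)
        · rw [if_pos h2]; have := ih i; linarith
        · rw [if_neg h2]; have := ih ⟨(i : ℕ) + 1, h⟩; linarith
      · rw [dif_neg h]; exact hzk
    | send =>
      simp only []
      have := ih i; linarith

lemma traj_le {n : ℕ} (v₀ : Fin n → ℝ) (c : ℕ → GWAction) (z : ℕ → ℝ) (j : ℕ → Fin n)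
    {B : ℝ} (hB : ∀ i, v₀ i ≤ B) (hB0 : 0 ≤ B) (hz : ∀ k, 1 ≤ k → 0 < z k) :
    ∀ k i, traj v₀ c z j k i ≤ B + complTime z k := by
  intro k
  induction k with
  | zero => intro i; simpa [complTime, traj] using hB i
  | succ k ih =>
    intro i
    have hzk : (0:ℝ) < z (k + 1) := hz (k + 1) (by omega)
    have hct : complTime z (k + 1) = complTime z k + z (k + 1) := by
      unfold complTime; rw [Finset.sum_range_succ]
    have hct0 : 0 ≤ complTime z k := by
      unfold complTime
      exact Finset.sum_nonneg fun l hl => (hz (l + 1) (by omega)).le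
    show traj v₀ c z j (k + 1) i ≤ B + complTime z (k + 1)
    unfold traj
    cases c (k + 1) with
    | poll =>
      simp only []
      unfold pollUpdate
      by_cases h : (i : ℕ) + 1 < n
      · rw [dif_pos h]
        by_cases h2 : (i : ℕ) < (j (k + 1) : ℕ)
        · rw [if_pos h2]; have := ih i; rw [hct]; linarith
        · rw [if_neg h2]; have := ih ⟨(i : ℕ) + 1, h⟩; rw [hct]; linarith
      · rw [dif_neg h]; rw [hct]; linarith
    | send =>
      simp only []
      have := ih i; rw [hct]; linarith

lemma invariant {n : ℕ} (hn : 1 ≤ n) (v₀ : Fin n → ℝ) (hsort : Antitone v₀)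
    (h0 : ∀ i, 0 ≤ v₀ i) (c : ℕ → GWAction) (z : ℕ → ℝ) (hz : ∀ k, 1 ≤ k → 0 < z k)
    (j : ℕ → Fin n) :
    ∀ k (s : Finset (Fin n)),
      botSum (traj v₀ c z (fun _ => ⟨0, hn⟩) k) s.card ≤ ∑ i ∈ s, traj v₀ c z j k i := by
  intro k
  induction k with
  | zero =>
    intro s
    exact botSum_le_sum hsort s.card s rfl
  | succ k ih =>
    intro s
    have hzk : (0:ℝ) < z (k + 1) := hz (k + 1) (by omega)
    have hnn : ∀ i, 0 ≤ traj v₀ c z j k i := traj_nonneg v₀ c z j h0 hz k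
    have hcardn : s.card ≤ n := by
      have := Finset.card_le_univ s
      simpa using this
    show botSum (traj v₀ c z (fun _ => ⟨0, hn⟩) (k + 1)) s.card
        ≤ ∑ i ∈ s, traj v₀ c z j (k + 1) i
    unfold traj
    cases hc : c (k + 1) with
    | send =>
      simp only []
      rw [botSum_send hn _ _ _]
      rw [Finset.sum_add_distrib, Finset.sum_const, nsmul_eq_mul]
      have := ih s
      linarith
    | poll =>
      simp only []
      rcases Nat.eq_zero_or_pos s.card with hm | hm
      · have hs : s = ∅ := Finset.card_eq_zero.mp hm
        simp [hs, hm, botSum]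
      · obtain ⟨m, hms⟩ : ∃ m, s.card = m + 1 := ⟨s.card - 1, by omega⟩
        have hmn : m < n := by omega
        rw [hms, botSum_poll hn _ _ hmn]
        obtain ⟨t, htc, hts⟩ := sum_pollUpdate (traj v₀ c z j k) (j (k + 1)) (z (k + 1)) s
        obtain ⟨t', ht's, ht'c⟩ := Finset.exists_subset_card_eq
          (show m ≤ t.card by omega)
        have h1 : ∑ i ∈ t', traj v₀ c z j k i ≤ ∑ i ∈ t, traj v₀ c z j k i :=
          Finset.sum_le_sum_of_subset_of_nonneg ht's (fun i _ _ => hnn i)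
        have h2 : botSum (traj v₀ c z (fun _ => ⟨0, hn⟩) k) m
            ≤ ∑ i ∈ t', traj v₀ c z j k i := by
          have := ih t'
          rwa [ht'c] at this
        rw [hms] at hts
        push_cast at hts ⊢
        linarith

lemma botSum_univ {n : ℕ} (hn : 1 ≤ n) (w : Fin n → ℝ) :
    botSum w n = ∑ i : Fin n, w i := by
  unfold botSum
  have h1 : ∀ l ∈ Finset.range n,
      (if h : n - 1 - l < n then w ⟨n - 1 - l, h⟩ else 0)
      = (fun l' => if h : l' < n then w ⟨l', h⟩ else 0) (n - 1 - l) := fun l _ => rfl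
  rw [Finset.sum_congr rfl h1,
    Finset.sum_range_reflect (fun l' => if h : l' < n then w ⟨l', h⟩ else 0) n,
    ← Fin.sum_univ_eq_sum_range (fun l' => if h : l' < n then w ⟨l', h⟩ else 0) n]
  apply Finset.sum_congr rfl
  intro i _
  simp only [dif_pos i.2, Fin.eta]

lemma sum_traj_le {n : ℕ} (hn : 1 ≤ n) (v₀ : Fin n → ℝ) (hsort : Antitone v₀)
    (h0 : ∀ i, 0 ≤ v₀ i) (c : ℕ → GWAction) (z : ℕ → ℝ) (hz : ∀ k, 1 ≤ k → 0 < z k)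
    (j : ℕ → Fin n) (k : ℕ) :
    ∑ i : Fin n, traj v₀ c z (fun _ => ⟨0, hn⟩) k i ≤ ∑ i : Fin n, traj v₀ c z j k i := by
  have h := invariant hn v₀ hsort h0 c z hz j k Finset.univ
  rwa [Finset.card_univ, Fintype.card_fin, botSum_univ hn] at h

lemma complTime_nonneg (z : ℕ → ℝ) (hz : ∀ k, 1 ≤ k → 0 < z k) (k : ℕ) :
    0 ≤ complTime z k :=
  Finset.sum_nonneg fun l _ => (hz (l + 1) (by omega)).le

lemma lastSendIdx_spec (c : ℕ → GWAction) (z : ℕ → ℝ) (t : ℝ) :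
    lastSendIdx c z t = 0 ∨
      (1 ≤ lastSendIdx c z t ∧ c (lastSendIdx c z t) = GWAction.send ∧
        complTime z (lastSendIdx c z t) ≤ t) := by
  set S := {K : ℕ | 1 ≤ K ∧ c K = GWAction.send ∧ complTime z K ≤ t} with hS
  by_cases hne : S.Nonempty
  · by_cases hbdd : BddAbove S
    · right; exact Nat.sSup_mem hne hbdd
    · left
      show sSup S = 0
      rw [csSup_of_not_bddAbove hbdd, csSup_empty]
      rfl
  · left
    show sSup S = 0
    rw [Set.not_nonempty_iff_eq_empty.mp hne, csSup_empty]
    rfl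

lemma complTime_lastSendIdx_le (c : ℕ → GWAction) (z : ℕ → ℝ) {t : ℝ} (ht : 0 ≤ t) :
    complTime z (lastSendIdx c z t) ≤ t := by
  rcases lastSendIdx_spec c z t with h | h
  · rw [h]; simpa [complTime] using ht
  · exact h.2.2

lemma lastSendIdx_eq_succ_iff (c : ℕ → GWAction) (z : ℕ → ℝ) (k : ℕ) (t : ℝ) :
    lastSendIdx c z t = k + 1 ↔
      (c (k + 1) = GWAction.send ∧ complTime z (k + 1) ≤ t) ∧
      ∀ m, k + 1 < m → c m = GWAction.send → ¬ complTime z m ≤ t := by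
  set S := {K : ℕ | 1 ≤ K ∧ c K = GWAction.send ∧ complTime z K ≤ t} with hS
  constructor
  · intro h
    have hbdd : BddAbove S := by
      by_contra hbdd
      have : sSup S = 0 := by rw [csSup_of_not_bddAbove hbdd, csSup_empty]; rfl
      rw [show lastSendIdx c z t = sSup S from rfl] at h
      omega
    have hne : S.Nonempty := by
      by_contra hne
      have : sSup S = 0 := by
        rw [Set.not_nonempty_iff_eq_empty.mp hne, csSup_empty]; rfl
      rw [show lastSendIdx c z t = sSup S from rfl] at h
      omega
    have hmem : k + 1 ∈ S := by
      have := Nat.sSup_mem hne hbdd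
      rwa [show sSup S = k + 1 from h] at this
    refine ⟨⟨hmem.2.1, hmem.2.2⟩, ?_⟩
    intro m hm hcm hTm
    have : m ∈ S := ⟨by omega, hcm, hTm⟩
    have := le_csSup hbdd this
    rw [show sSup S = k + 1 from h] at this
    omega
  · rintro ⟨⟨hsend, hT⟩, hmax⟩
    have hmem : k + 1 ∈ S := ⟨by omega, hsend, hT⟩
    have hub : ∀ m ∈ S, m ≤ k + 1 := by
      intro m hm
      by_contra hgt
      exact hmax m (by omega) hm.2.1 hm.2.2
    show sSup S = k + 1
    exact le_antisymm (csSup_le ⟨k + 1, hmem⟩ hub) (le_csSup ⟨k + 1, hub⟩ hmem)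

lemma measurable_lastSendIdx (c : ℕ → GWAction) (z : ℕ → ℝ) :
    Measurable (fun t => lastSendIdx c z t) := by
  have hsucc : ∀ k : ℕ, MeasurableSet {t : ℝ | lastSendIdx c z t = k + 1} := by
    intro k
    have heq : {t : ℝ | lastSendIdx c z t = k + 1} =
        ({t : ℝ | c (k + 1) = GWAction.send ∧ complTime z (k + 1) ≤ t}) ∩
        ⋂ m, {t : ℝ | k + 1 < m → c m = GWAction.send → ¬ complTime z m ≤ t} := by
      ext t
      simp only [Set.mem_setOf_eq, Set.mem_inter_iff, Set.mem_iInter,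
        lastSendIdx_eq_succ_iff c z k t]
    rw [heq]
    apply MeasurableSet.inter
    · by_cases h : c (k + 1) = GWAction.send
      · have : {t : ℝ | c (k + 1) = GWAction.send ∧ complTime z (k + 1) ≤ t}
            = Set.Ici (complTime z (k + 1)) := by
          ext t; simp [h, Set.mem_Ici]
        rw [this]; exact measurableSet_Ici
      · have : {t : ℝ | c (k + 1) = GWAction.send ∧ complTime z (k + 1) ≤ t} = ∅ := by
          ext t; simp [h]
        rw [this]; exact MeasurableSet.empty
    · apply MeasurableSet.iInter
      intro m
      by_cases h1 : k + 1 < m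
      · by_cases h2 : c m = GWAction.send
        · have : {t : ℝ | k + 1 < m → c m = GWAction.send → ¬ complTime z m ≤ t}
              = Set.Iio (complTime z m) := by
            ext t; simp [h1, h2, Set.mem_Iio, not_le]
          rw [this]; exact measurableSet_Iio
        · have : {t : ℝ | k + 1 < m → c m = GWAction.send → ¬ complTime z m ≤ t}
              = Set.univ := by
            ext t; simp [h2]
          rw [this]; exact MeasurableSet.univ
      · have : {t : ℝ | k + 1 < m → c m = GWAction.send → ¬ complTime z m ≤ t}
            = Set.univ := by
          ext t; simp [h1]
        rw [this]; exact MeasurableSet.univ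
  apply measurable_to_countable'
  intro k
  cases k with
  | succ k => exact hsucc k
  | zero =>
    have heq : (fun t => lastSendIdx c z t) ⁻¹' {0}
        = (⋃ k : ℕ, {t : ℝ | lastSendIdx c z t = k + 1})ᶜ := by
      ext t
      simp only [Set.mem_preimage, Set.mem_singleton_iff, Set.mem_compl_iff,
        Set.mem_iUnion, Set.mem_setOf_eq]
      constructor
      · intro h ⟨k, hk⟩; omega
      · intro h
        by_contra h0
        exact h ⟨lastSendIdx c z t - 1, by omega⟩
    rw [heq]
    exact (MeasurableSet.iUnion hsucc).compl

lemma monitorAge_nonneg {n : ℕ} (v₀ : Fin n → ℝ) (c : ℕ → GWAction) (z : ℕ → ℝ)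
    (j : ℕ → Fin n) (h0 : ∀ i, 0 ≤ v₀ i) (hz : ∀ k, 1 ≤ k → 0 < z k)
    {t : ℝ} (ht : 0 ≤ t) (i : Fin n) : 0 ≤ monitorAge v₀ c z j t i := by
  unfold monitorAge
  have h1 := traj_nonneg v₀ c z j h0 hz (lastSendIdx c z t) i
  have h2 := complTime_lastSendIdx_le c z (t := t) ht
  linarith

lemma monitorAge_le {n : ℕ} (v₀ : Fin n → ℝ) (c : ℕ → GWAction) (z : ℕ → ℝ)
    (j : ℕ → Fin n) {B : ℝ} (hB : ∀ i, v₀ i ≤ B) (hB0 : 0 ≤ B)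
    (hz : ∀ k, 1 ≤ k → 0 < z k) (t : ℝ) (i : Fin n) :
    monitorAge v₀ c z j t i ≤ B + t := by
  unfold monitorAge
  have h1 := traj_le v₀ c z j hB hB0 hz (lastSendIdx c z t) i
  linarith

lemma sum_monitorAge_repr {n : ℕ} (v₀ : Fin n → ℝ) (c : ℕ → GWAction) (z : ℕ → ℝ)
    (j : ℕ → Fin n) (t : ℝ) :
    ∑ i : Fin n, monitorAge v₀ c z j t i
      = (∑ i : Fin n, traj v₀ c z j (lastSendIdx c z t) i
          - (n : ℝ) * complTime z (lastSendIdx c z t)) + (n : ℝ) * t := by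
  unfold monitorAge
  rw [Finset.sum_add_distrib, Finset.sum_const, Finset.card_univ, Fintype.card_fin,
    nsmul_eq_mul]
  ring

lemma monitor_measurable {n : ℕ} (v₀ : Fin n → ℝ) (c : ℕ → GWAction) (z : ℕ → ℝ)
    (j : ℕ → Fin n) :
    Measurable (fun t => (1 / (n : ℝ)) * ∑ i : Fin n, monitorAge v₀ c z j t i) := by
  have hrw : (fun t => (1 / (n : ℝ)) * ∑ i : Fin n, monitorAge v₀ c z j t i)
      = fun t => (1 / (n : ℝ)) *
          (((fun k => ∑ i : Fin n, traj v₀ c z j k i - (n : ℝ) * complTime z k)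
            ∘ (fun t => lastSendIdx c z t)) t + (n : ℝ) * t) := by
    funext t
    rw [sum_monitorAge_repr]
    rfl
  rw [hrw]
  apply Measurable.const_mul
  apply Measurable.add
  · exact (measurable_from_top).comp (measurable_lastSendIdx c z)
  · exact measurable_id.const_mul _

lemma monitor_intervalIntegrable {n : ℕ} (hn : 1 ≤ n) (v₀ : Fin n → ℝ)
    (c : ℕ → GWAction) (z : ℕ → ℝ) (j : ℕ → Fin n) {B : ℝ}
    (hB : ∀ i, v₀ i ≤ B) (hB0 : 0 ≤ B) (h0 : ∀ i, 0 ≤ v₀ i)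
    (hz : ∀ k, 1 ≤ k → 0 < z k) {T : ℝ} (hT : 0 < T) :
    IntervalIntegrable (fun t => (1 / (n : ℝ)) * ∑ i : Fin n, monitorAge v₀ c z j t i)
      MeasureTheory.volume 0 T := by
  rw [intervalIntegrable_iff_integrableOn_Ioc_of_le hT.le]
  apply MeasureTheory.Integrable.mono'
    (MeasureTheory.integrable_const (B + T))
    ((monitor_measurable v₀ c z j).aestronglyMeasurable)
  rw [MeasureTheory.ae_restrict_iff' measurableSet_Ioc]
  filter_upwards with t ht
  rcases ht with ⟨ht0, htT⟩
  have hnn : (0:ℝ) ≤ ∑ i : Fin n, monitorAge v₀ c z j t i :=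
    Finset.sum_nonneg fun i _ => monitorAge_nonneg v₀ c z j h0 hz ht0.le i
  have hub : ∑ i : Fin n, monitorAge v₀ c z j t i ≤ (n : ℝ) * (B + T) := by
    calc ∑ i : Fin n, monitorAge v₀ c z j t i
        ≤ ∑ _i : Fin n, (B + T) := by
          apply Finset.sum_le_sum
          intro i _
          have := monitorAge_le v₀ c z j hB hB0 hz t i
          linarith
      _ = (n : ℝ) * (B + T) := by
          rw [Finset.sum_const, Finset.card_univ, Fintype.card_fin, nsmul_eq_mul]
  have hnpos : (0:ℝ) < (n : ℝ) := by exact_mod_cast hn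
  rw [Real.norm_eq_abs, abs_mul, abs_of_nonneg (by positivity : (0:ℝ) ≤ 1 / (n:ℝ)),
    abs_of_nonneg hnn]
  calc (1 / (n:ℝ)) * ∑ i : Fin n, monitorAge v₀ c z j t i
      ≤ (1 / (n:ℝ)) * ((n : ℝ) * (B + T)) := by
        apply mul_le_mul_of_nonneg_left hub (by positivity)
    _ = B + T := by field_simp

end MafAux

/-- AoI-comparison consequence of Theorem 1, on each sample path: for every horizon
`T > 0`, the time-averaged network age at the monitor under maximum-age-first polling
is no larger than under any other rank sequence. -/
theorem maf_aoi_dominates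
    (n : ℕ) (hn : 1 ≤ n) (v₀ : Fin n → ℝ)
    (hv₀_sorted : Antitone v₀) (hv₀_nonneg : ∀ i, 0 ≤ v₀ i)
    (c : ℕ → GWAction) (z : ℕ → ℝ) (hz : ∀ k, 1 ≤ k → 0 < z k)
    (j : ℕ → Fin n) (T : ℝ) (hT : 0 < T) :
    (1 / T) * ∫ t in (0:ℝ)..T, (1 / (n : ℝ)) * ∑ i : Fin n,
        monitorAge v₀ c z (fun _ => ⟨0, hn⟩) t i
      ≤ (1 / T) * ∫ t in (0:ℝ)..T, (1 / (n : ℝ)) * ∑ i : Fin n,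
        monitorAge v₀ c z j t i := by
  set B := v₀ ⟨0, hn⟩ with hBdef
  have hB : ∀ i, v₀ i ≤ B := by
    intro i
    exact hv₀_sorted (show (⟨0, hn⟩ : Fin n) ≤ i from by simp [Fin.le_def])
  have hB0 : 0 ≤ B := hv₀_nonneg _
  have hnpos : (0:ℝ) < (n : ℝ) := by exact_mod_cast hn
  have hint1 := MafAux.monitor_intervalIntegrable hn v₀ c z (fun _ => ⟨0, hn⟩)
    hB hB0 hv₀_nonneg hz hT
  have hint2 := MafAux.monitor_intervalIntegrable hn v₀ c z j hB hB0 hv₀_nonneg hz hT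
  have hptwise : ∀ t ∈ Set.Icc (0:ℝ) T,
      (1 / (n : ℝ)) * ∑ i : Fin n, monitorAge v₀ c z (fun _ => ⟨0, hn⟩) t i
      ≤ (1 / (n : ℝ)) * ∑ i : Fin n, monitorAge v₀ c z j t i := by
    intro t _
    apply mul_le_mul_of_nonneg_left _ (by positivity)
    rw [MafAux.sum_monitorAge_repr, MafAux.sum_monitorAge_repr]
    have := MafAux.sum_traj_le hn v₀ hv₀_sorted hv₀_nonneg c z hz j (lastSendIdx c z t)
    linarith
  exact mul_le_mul_of_nonneg_left
    (intervalIntegral.integral_mono_on hT.le hint1 hint2 hptwise)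
    (by positivity)
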